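/- arXiv:0909.2408 — 2 statements merged into one kernel-verified Lean document; each statement's English description precedes it below -/
import Mathlib

section
/- For the cascade network with source distribution p0(x), the coordination capacity region C_{p0} is a convex set of triples (R1, R2, p(y,z|x)); consequently, for each fixed conditional pmf p(y,z|x) the rate-coordination region R_{p0}(p(y,z|x)) = {(R1,R2) : (R1,R2,p(y,z|x)) ∈ C_{p0}} is convex, and for each fixed rate pair (R1,R2) the coordination-rate region P_{p0}(R1,R2) = {p(y,z|x) : (R1,R2,p(y,z|x)) ∈ C_{p0}} is convex. -/
open Filter

/-- A probability mass function on a finite alphabet. -/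
def IsPMF {α : Type} [Fintype α] (p : α → ℝ) : Prop :=
  (∀ a, 0 ≤ p a) ∧ ∑ a, p a = 1

/-- Total variation distance: half the `L¹` distance. -/
noncomputable def tv {α : Type} [Fintype α] (p q : α → ℝ) : ℝ :=
  (1 / 2) * ∑ a, |p a - q a|

open Classical in
/-- Joint type (empirical distribution) of a sequence. -/
noncomputable def jointType {α : Type} (n : ℕ) (s : Fin n → α) : α → ℝ :=
  fun a => ((Finset.univ.filter fun t => s t = a).card : ℝ) / n

open Classical in
/-- Pushforward of a mass function along a map. -/
noncomputable def pmfMap {S α : Type} [Fintype S] (p : S → ℝ) (f : S → α) : α → ℝ :=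
  fun a => ∑ s, if f s = a then p s else 0

/-- Shannon entropy, base 2, with the convention `0 log 0 = 0`. -/
noncomputable def H2 {α : Type} [Fintype α] (p : α → ℝ) : ℝ :=
  ∑ a, -(p a * Real.logb 2 (p a))

/-- Mutual information `I(f(S); g(S))` for `S ∼ p`. -/
noncomputable def MI {S α β : Type} [Fintype S] [Fintype α] [Fintype β]
    (p : S → ℝ) (f : S → α) (g : S → β) : ℝ :=
  H2 (pmfMap p f) + H2 (pmfMap p g) - H2 (pmfMap p fun s => (f s, g s))

/-- Conditional mutual information `I(f(S); g(S) | h(S))` for `S ∼ p`. -/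
noncomputable def condMI {S α β γ : Type} [Fintype S] [Fintype α] [Fintype β] [Fintype γ]
    (p : S → ℝ) (f : S → α) (g : S → β) (h : S → γ) : ℝ :=
  H2 (pmfMap p fun s => (f s, h s)) + H2 (pmfMap p fun s => (g s, h s))
    - H2 (pmfMap p fun s => (f s, g s, h s)) - H2 (pmfMap p h)

/-- The number of messages `⌈2^{nR}⌉` available at rate `R` and blocklength `n`. -/
noncomputable def msgCount (n : ℕ) (R : ℝ) : ℕ := ⌈(2 : ℝ) ^ ((n : ℝ) * R)⌉₊

open Classical in
/-- Probability of the event `E` under the (mass) distribution `μ`. -/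
noncomputable def probOf {α : Type} [Fintype α] (μ : α → ℝ) (E : α → Prop) : ℝ :=
  ∑ a, if E a then μ a else 0

open Classical in
/-- Probability of an event over `(X^n, ω)` where `X^n` is i.i.d. `p0` independent of the
common randomness `ω ∼ pω`. -/
noncomputable def probIIDCR {𝒳 : Type} [Fintype 𝒳] (p0 : 𝒳 → ℝ) (n m : ℕ)
    (pω : Fin m → ℝ) (E : (Fin n → 𝒳) → Fin m → Prop) : ℝ :=
  ∑ xs : Fin n → 𝒳, ∑ ω : Fin m, if E xs ω then (∏ t, p0 (xs t)) * pω ω else 0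

/-- Achievability of `p(y,z|x)` at rates `(R1,R2)` in the cascade network, using
coordination codes with common randomness on finite probability spaces. -/
def CascadeAchievableCR {𝒳 𝒴 𝒵 : Type} [Fintype 𝒳] [Fintype 𝒴] [Fintype 𝒵]
    (p0 : 𝒳 → ℝ) (R1 R2 : ℝ) (q : 𝒳 → 𝒴 × 𝒵 → ℝ) : Prop :=
  ∃ m : ℕ → ℕ, ∃ pω : (n : ℕ) → Fin (m n) → ℝ,
  ∃ enc : (n : ℕ) → (Fin n → 𝒳) → Fin (m n) → Fin (msgCount n R1),
  ∃ rc : (n : ℕ) → Fin (msgCount n R1) → Fin (m n) → Fin (msgCount n R2),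
  ∃ decY : (n : ℕ) → Fin (msgCount n R1) → Fin (m n) → (Fin n → 𝒴),
  ∃ decZ : (n : ℕ) → Fin (msgCount n R2) → Fin (m n) → (Fin n → 𝒵),
    (∀ n, IsPMF (pω n)) ∧
    ∀ ε > 0,
      Tendsto (fun n => probIIDCR p0 n (m n) (pω n) fun xs ω =>
          ε ≤ tv (jointType n fun t =>
                (xs t, decY n (enc n xs ω) ω t, decZ n (rc n (enc n xs ω) ω) ω t))
              (fun a => p0 a.1 * q a.1 a.2)) atTop (nhds 0)

/-- Coordination capacity region of the cascade network: closure of the achievable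
rate–coordination triples `(R1, R2, p(y,z|x))`. -/
def cascadeCapacityCR {𝒳 𝒴 𝒵 : Type} [Fintype 𝒳] [Fintype 𝒴] [Fintype 𝒵] (p0 : 𝒳 → ℝ) :
    Set (ℝ × ℝ × (𝒳 → 𝒴 × 𝒵 → ℝ)) :=
  closure {v | 0 ≤ v.1 ∧ 0 ≤ v.2.1 ∧ (∀ x, IsPMF (v.2.2 x)) ∧
    CascadeAchievableCR p0 v.1 v.2.1 v.2.2}


/-!
The closure of a set is convex as soon as every convex combination of two of its points lies in
the closure. For two achievable triples this is time sharing: at blocklength `n`, run a code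
for the first triple on the first `⌊a n⌋₊` symbols and a code for the second on the remaining
ones, with independent common randomness, and send the two messages of each link as one. The
joint type of the concatenation is the `⌊a n⌋₊ / n`-mixture of the two block types, so its total
variation distance to the mixed target is at most the sum of the two block distances plus
`|⌊a n⌋₊ / n - a|`. The message counts multiply, which is rate `a R + b R'` up to rounding; an
arbitrarily small rate slack absorbs the rounding and disappears in the closure. The two
sections of a convex set are convex as preimages under affine maps.
-/

open Filter Topology

section FiniteProbability

variable {α β : Type} [Fintype α] [Fintype β]

lemma IsPMF.joint {q : α → β → ℝ} {p : α → ℝ} (hp : IsPMF p) (hq : ∀ a, IsPMF (q a)) :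
    IsPMF fun c : α × β => p c.1 * q c.1 c.2 := by
  refine ⟨fun c => mul_nonneg (hp.1 c.1) ((hq c.1).1 c.2), ?_⟩
  simp only [Fintype.sum_prod_type, ← Finset.mul_sum, fun a => (hq a).2, mul_one, hp.2]

lemma IsPMF.prod {p : α → ℝ} {q : β → ℝ} (hp : IsPMF p) (hq : IsPMF q) :
    IsPMF fun c : α × β => p c.1 * q c.2 :=
  hp.joint fun _ => hq

lemma IsPMF.comp_equiv {p : α → ℝ} (hp : IsPMF p) (e : β ≃ α) : IsPMF (p ∘ e) :=
  ⟨fun b => hp.1 (e b), by rw [← hp.2]; exact e.sum_comp p⟩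

lemma IsPMF.convexComb {p q : α → ℝ} (hp : IsPMF p) (hq : IsPMF q) {a b : ℝ}
    (ha : 0 ≤ a) (hb : 0 ≤ b) (hab : a + b = 1) : IsPMF (a • p + b • q) := by
  refine ⟨fun x => ?_, ?_⟩
  · simp only [Pi.add_apply, Pi.smul_apply, smul_eq_mul]
    exact add_nonneg (mul_nonneg ha (hp.1 x)) (mul_nonneg hb (hq.1 x))
  · simp only [Pi.add_apply, Pi.smul_apply, smul_eq_mul, Finset.sum_add_distrib,
      ← Finset.mul_sum, hp.2, hq.2, mul_one, hab]

lemma IsPMF.iid {p : α → ℝ} (hp : IsPMF p) (n : ℕ) : IsPMF fun xs : Fin n → α => ∏ t, p (xs t) :=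
  ⟨fun _ => Finset.prod_nonneg fun t _ => hp.1 _, by rw [← Fintype.sum_pow, hp.2, one_pow]⟩

lemma probOf_nonneg {μ : α → ℝ} (hμ : ∀ a, 0 ≤ μ a) (E : α → Prop) : 0 ≤ probOf μ E := by
  classical
  exact Finset.sum_nonneg fun a _ => by split_ifs <;> simp [hμ a]

lemma probOf_comp_equiv (μ : α → ℝ) (E : α → Prop) (e : β ≃ α) :
    probOf (μ ∘ e) (E ∘ e) = probOf μ E := by
  classical
  exact e.sum_comp fun a => if E a then μ a else 0

lemma probOf_prod_le_add {μ : α → ℝ} {ν : β → ℝ} (hμ : IsPMF μ) (hν : IsPMF ν)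
    {E : α × β → Prop} {A : α → Prop} {B : β → Prop} (h : ∀ a b, E (a, b) → A a ∨ B b) :
    probOf (fun c => μ c.1 * ν c.2) E ≤ probOf μ A + probOf ν B := by
  classical
  calc probOf (fun c => μ c.1 * ν c.2) E
      ≤ ∑ a, ∑ b, ((if A a then μ a else 0) * ν b + μ a * if B b then ν b else 0) := by
        unfold probOf
        rw [Fintype.sum_prod_type]
        gcongr with a _ b _
        have := h a b
        have := hμ.1 a
        have := hν.1 b
        split_ifs <;> simp_all <;> positivity
    _ = probOf μ A + probOf ν B := by
        simp only [Finset.sum_add_distrib, ← Finset.mul_sum, ← Finset.sum_mul, hμ.2, hν.2,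
          mul_one, one_mul]
        rfl

end FiniteProbability

lemma probIIDCR_eq_probOf {𝒳 : Type} [Fintype 𝒳] (p0 : 𝒳 → ℝ) (n m : ℕ) (pω : Fin m → ℝ)
    (E : (Fin n → 𝒳) → Fin m → Prop) :
    probIIDCR p0 n m pω E =
      probOf (fun c : (Fin n → 𝒳) × Fin m => (∏ t, p0 (c.1 t)) * pω c.2) fun c => E c.1 c.2 := by
  unfold probIIDCR probOf
  rw [Fintype.sum_prod_type]

section JointTypes

variable {β : Type}

lemma tv_nonneg [Fintype β] (p q : β → ℝ) : 0 ≤ tv p q :=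
  mul_nonneg (by norm_num) (Finset.sum_nonneg fun _ _ => abs_nonneg _)

lemma tv_convexComb_le [Fintype β] {P Q μ ν : β → ℝ} (hμ : IsPMF μ) (hν : IsPMF ν) {r s : ℝ}
    (hr0 : 0 ≤ r) (hr1 : r ≤ 1) :
    tv (r • P + (1 - r) • Q) (s • μ + (1 - s) • ν) ≤ tv P μ + tv Q ν + |r - s| := by
  have pointwise : ∀ b, |r * P b + (1 - r) * Q b - (s * μ b + (1 - s) * ν b)|
      ≤ r * |P b - μ b| + (1 - r) * |Q b - ν b| + |r - s| * (μ b + ν b) := by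
    intro b
    have hμν : |μ b - ν b| ≤ μ b + ν b := abs_sub _ _ |>.trans_eq <| by
      rw [abs_of_nonneg (hμ.1 b), abs_of_nonneg (hν.1 b)]
    calc |r * P b + (1 - r) * Q b - (s * μ b + (1 - s) * ν b)|
        = |r * (P b - μ b) + (1 - r) * (Q b - ν b) + (r - s) * (μ b - ν b)| := by ring_nf
      _ ≤ |r * (P b - μ b)| + |(1 - r) * (Q b - ν b)| + |(r - s) * (μ b - ν b)| :=
        abs_add_three _ _ _
      _ ≤ r * |P b - μ b| + (1 - r) * |Q b - ν b| + |r - s| * (μ b + ν b) := by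
        rw [abs_mul, abs_mul, abs_mul, abs_of_nonneg hr0, abs_of_nonneg (sub_nonneg.2 hr1)]
        gcongr
  have hsum := Finset.sum_le_sum fun b (_ : b ∈ Finset.univ) => pointwise b
  simp only [Finset.sum_add_distrib, ← Finset.mul_sum, hμ.2, hν.2] at hsum
  have hP := tv_nonneg P μ
  have hQ := tv_nonneg Q ν
  unfold tv at *
  simp only [Pi.add_apply, Pi.smul_apply, smul_eq_mul]
  nlinarith [abs_nonneg (r - s)]

lemma jointType_append {k l : ℕ} (s : Fin k → β) (u : Fin l → β) :
    jointType (k + l) (Fin.append s u) =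
      ((k : ℝ) / (k + l : ℕ)) • jointType k s + ((l : ℝ) / (k + l : ℕ)) • jointType l u := by
  have rescale : ∀ {c m : ℕ}, c ≤ m → (m : ℝ) / (k + l : ℕ) * (c / m) = c / (k + l : ℕ) := by
    intro c m hcm
    rcases Nat.eq_zero_or_pos m with rfl | hm
    · simp [Nat.le_zero.1 hcm]
    · field_simp
  funext b
  simp only [jointType, Pi.add_apply, Pi.smul_apply, smul_eq_mul]
  rw [rescale (Finset.card_le_univ _ |>.trans_eq (Fintype.card_fin k)),
    rescale (Finset.card_le_univ _ |>.trans_eq (Fintype.card_fin l)), ← add_div]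
  congr 1
  rw [Finset.card_filter, Finset.card_filter, Finset.card_filter, Fin.sum_univ_add]
  push_cast
  congr 1
  · exact Finset.sum_congr rfl fun t _ => by rw [Fin.append_left]
  · exact Finset.sum_congr rfl fun t _ => by rw [Fin.append_right]

end JointTypes

structure CascadeCode (𝒳 𝒴 𝒵 : Type) (n M1 M2 : ℕ) where
  m : ℕ
  pω : Fin m → ℝ
  enc : (Fin n → 𝒳) → Fin m → Fin M1
  rc : Fin M1 → Fin m → Fin M2
  decY : Fin M1 → Fin m → Fin n → 𝒴
  decZ : Fin M2 → Fin m → Fin n → 𝒵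

namespace CascadeCode

variable {𝒳 𝒴 𝒵 : Type} {n M1 M2 : ℕ}

def actions (c : CascadeCode 𝒳 𝒴 𝒵 n M1 M2) (xs : Fin n → 𝒳) (ω : Fin c.m) :
    Fin n → 𝒳 × 𝒴 × 𝒵 :=
  fun t => (xs t, c.decY (c.enc xs ω) ω t, c.decZ (c.rc (c.enc xs ω) ω) ω t)

noncomputable def errProb [Fintype 𝒳] [Fintype 𝒴] [Fintype 𝒵] (c : CascadeCode 𝒳 𝒴 𝒵 n M1 M2)
    (p0 : 𝒳 → ℝ) (ε : ℝ) (μ : 𝒳 × 𝒴 × 𝒵 → ℝ) : ℝ :=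
  probIIDCR p0 n c.m c.pω fun xs ω => ε ≤ tv (jointType n (c.actions xs ω)) μ

lemma errProb_nonneg [Fintype 𝒳] [Fintype 𝒴] [Fintype 𝒵] (c : CascadeCode 𝒳 𝒴 𝒵 n M1 M2)
    {p0 : 𝒳 → ℝ} (hp0 : IsPMF p0) (hc : IsPMF c.pω) (ε : ℝ) (μ : 𝒳 × 𝒴 × 𝒵 → ℝ) :
    0 ≤ c.errProb p0 ε μ := by
  rw [errProb, probIIDCR_eq_probOf]
  exact probOf_nonneg ((hp0.iid n).prod hc).1 _

def append {k l N1 N2 : ℕ} (c : CascadeCode 𝒳 𝒴 𝒵 k M1 M2) (d : CascadeCode 𝒳 𝒴 𝒵 l N1 N2) :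
    CascadeCode 𝒳 𝒴 𝒵 (k + l) (M1 * N1) (M2 * N2) where
  m := c.m * d.m
  pω ω := c.pω (finProdFinEquiv.symm ω).1 * d.pω (finProdFinEquiv.symm ω).2
  enc xs ω := finProdFinEquiv
    (c.enc (fun i => xs (Fin.castAdd l i)) (finProdFinEquiv.symm ω).1,
      d.enc (fun i => xs (Fin.natAdd k i)) (finProdFinEquiv.symm ω).2)
  rc i ω := finProdFinEquiv
    (c.rc (finProdFinEquiv.symm i).1 (finProdFinEquiv.symm ω).1,
      d.rc (finProdFinEquiv.symm i).2 (finProdFinEquiv.symm ω).2)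
  decY i ω := Fin.append (c.decY (finProdFinEquiv.symm i).1 (finProdFinEquiv.symm ω).1)
    (d.decY (finProdFinEquiv.symm i).2 (finProdFinEquiv.symm ω).2)
  decZ i ω := Fin.append (c.decZ (finProdFinEquiv.symm i).1 (finProdFinEquiv.symm ω).1)
    (d.decZ (finProdFinEquiv.symm i).2 (finProdFinEquiv.symm ω).2)

section Append

variable {k l N1 N2 : ℕ} (c : CascadeCode 𝒳 𝒴 𝒵 k M1 M2) (d : CascadeCode 𝒳 𝒴 𝒵 l N1 N2)

lemma actions_append (xs : Fin k → 𝒳) (ys : Fin l → 𝒳) (ω : Fin c.m) (ω' : Fin d.m) :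
    (c.append d).actions (Fin.append xs ys) (finProdFinEquiv (ω, ω')) =
      Fin.append (c.actions xs ω) (d.actions ys ω') := by
  funext t
  refine Fin.addCases (fun i => ?_) (fun i => ?_) t <;> simp [actions, append]

lemma isPMF_append_pω (hc : IsPMF c.pω) (hd : IsPMF d.pω) : IsPMF (c.append d).pω :=
  (hc.prod hd).comp_equiv finProdFinEquiv.symm

/-- The probability space of `c.append d` as the product of those of `c` and `d`. -/
def blockEquiv :
    ((Fin k → 𝒳) × Fin c.m) × ((Fin l → 𝒳) × Fin d.m) ≃ (Fin (k + l) → 𝒳) × Fin (c.append d).m :=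
  (Equiv.prodProdProdComm _ _ _ _).trans ((Fin.appendEquiv k l).prodCongr finProdFinEquiv)

lemma blockEquiv_apply (xs : Fin k → 𝒳) (ω : Fin c.m) (ys : Fin l → 𝒳) (ω' : Fin d.m) :
    blockEquiv c d ((xs, ω), (ys, ω')) = (Fin.append xs ys, finProdFinEquiv (ω, ω')) :=
  rfl

variable [Fintype 𝒳] [Fintype 𝒴] [Fintype 𝒵]

/-- An `ε`-bad outcome of the concatenation has an `ε/3`-bad block, because the mismatch between
the time-sharing fraction and the mixing weight costs at most `ε/3` (`tv_convexComb_le`). -/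
lemma errProb_append_le {p0 : 𝒳 → ℝ} (hp0 : IsPMF p0) (hc : IsPMF c.pω) (hd : IsPMF d.pω)
    {μ ν : 𝒳 × 𝒴 × 𝒵 → ℝ} (hμ : IsPMF μ) (hν : IsPMF ν) (hkl : 0 < k + l) {s ε : ℝ}
    (hs : |(k : ℝ) / (k + l : ℕ) - s| ≤ ε / 3) :
    (c.append d).errProb p0 ε (s • μ + (1 - s) • ν) ≤
      c.errProb p0 (ε / 3) μ + d.errProb p0 (ε / 3) ν := by
  have hweight : (fun b => (∏ t, p0 (b.1 t)) * (c.append d).pω b.2) ∘ blockEquiv c d =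
      fun a => ((∏ t, p0 (a.1.1 t)) * c.pω a.1.2) * ((∏ t, p0 (a.2.1 t)) * d.pω a.2.2) := by
    funext ⟨⟨xs, ω⟩, ys, ω'⟩
    rw [Function.comp_apply, blockEquiv_apply]
    simp only [append, Equiv.symm_apply_apply, Fin.prod_univ_add, Fin.append_left,
      Fin.append_right]
    ring
  have hfrac : (l : ℝ) / (k + l : ℕ) = 1 - (k : ℝ) / (k + l : ℕ) := by
    have : (0 : ℝ) < (k + l : ℕ) := by exact_mod_cast hkl
    field_simp
    push_cast
    ring
  have hr1 : (k : ℝ) / (k + l : ℕ) ≤ 1 := div_le_one_of_le₀ (by simp) (by positivity)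
  simp only [errProb, probIIDCR_eq_probOf]
  rw [← probOf_comp_equiv _ _ (blockEquiv c d), hweight]
  refine probOf_prod_le_add ((hp0.iid k).prod hc) ((hp0.iid l).prod hd)
    fun ⟨xs, ω⟩ ⟨ys, ω'⟩ hfar => ?_
  rw [Function.comp_apply, blockEquiv_apply, actions_append, jointType_append, hfrac] at hfar
  have hsplit := tv_convexComb_le (P := jointType k (c.actions xs ω))
    (Q := jointType l (d.actions ys ω')) hμ hν (s := s) (by positivity) hr1
  by_contra! hnear
  linarith [hnear.1, hnear.2]

end Append

/-- Incoming messages are read modulo `M1`, `M2`, so nothing changes as long as the message sets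
only grow. -/
def resize (c : CascadeCode 𝒳 𝒴 𝒵 n M1 M2) (N1 N2 : ℕ) [NeZero M1] [NeZero M2] [NeZero N1]
    [NeZero N2] : CascadeCode 𝒳 𝒴 𝒵 n N1 N2 where
  m := c.m
  pω := c.pω
  enc xs ω := Fin.ofNat N1 (c.enc xs ω)
  rc i ω := Fin.ofNat N2 (c.rc (Fin.ofNat M1 i) ω)
  decY i := c.decY (Fin.ofNat M1 i)
  decZ i := c.decZ (Fin.ofNat M2 i)

lemma actions_resize (c : CascadeCode 𝒳 𝒴 𝒵 n M1 M2) {N1 N2 : ℕ} [NeZero M1] [NeZero M2]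
    [NeZero N1] [NeZero N2] (h1 : M1 ≤ N1) (h2 : M2 ≤ N2) :
    (c.resize N1 N2).actions = c.actions := by
  funext xs ω t
  simp [actions, resize, Nat.mod_eq_of_lt ((c.enc xs ω).2.trans_le h1),
    Nat.mod_eq_of_lt ((c.rc (c.enc xs ω) ω).2.trans_le h2)]

lemma isPMF_cast_pω {n' : ℕ} (h : n = n') {c : CascadeCode 𝒳 𝒴 𝒵 n M1 M2} (hc : IsPMF c.pω) :
    IsPMF (h ▸ c : CascadeCode 𝒳 𝒴 𝒵 n' M1 M2).pω := by
  subst h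
  exact hc

variable [Fintype 𝒳] [Fintype 𝒴] [Fintype 𝒵]

lemma errProb_resize (c : CascadeCode 𝒳 𝒴 𝒵 n M1 M2) {N1 N2 : ℕ} [NeZero M1] [NeZero M2]
    [NeZero N1] [NeZero N2] (h1 : M1 ≤ N1) (h2 : M2 ≤ N2) (p0 : 𝒳 → ℝ) (ε : ℝ)
    (μ : 𝒳 × 𝒴 × 𝒵 → ℝ) : (c.resize N1 N2).errProb p0 ε μ = c.errProb p0 ε μ := by
  rw [errProb, actions_resize c h1 h2]
  rfl

lemma errProb_cast {n' : ℕ} (h : n = n') (c : CascadeCode 𝒳 𝒴 𝒵 n M1 M2) (p0 : 𝒳 → ℝ) (ε : ℝ)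
    (μ : 𝒳 × 𝒴 × 𝒵 → ℝ) :
    (h ▸ c : CascadeCode 𝒳 𝒴 𝒵 n' M1 M2).errProb p0 ε μ = c.errProb p0 ε μ := by
  subst h
  rfl

end CascadeCode

section Achievability

variable {𝒳 𝒴 𝒵 : Type} [Fintype 𝒳] [Fintype 𝒴] [Fintype 𝒵]

theorem cascadeAchievableCR_iff {p0 : 𝒳 → ℝ} {R1 R2 : ℝ} {q : 𝒳 → 𝒴 × 𝒵 → ℝ} :
    CascadeAchievableCR p0 R1 R2 q ↔
      ∃ c : (n : ℕ) → CascadeCode 𝒳 𝒴 𝒵 n (msgCount n R1) (msgCount n R2),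
        (∀ n, IsPMF (c n).pω) ∧ ∀ ε > 0,
          Tendsto (fun n => (c n).errProb p0 ε fun a => p0 a.1 * q a.1 a.2) atTop (𝓝 0) := by
  constructor
  · rintro ⟨m, pω, enc, rc, decY, decZ, h⟩
    exact ⟨fun n => ⟨m n, pω n, enc n, rc n, decY n, decZ n⟩, h⟩
  · rintro ⟨c, h⟩
    exact ⟨fun n => (c n).m, fun n => (c n).pω, fun n => (c n).enc, fun n => (c n).rc,
      fun n => (c n).decY, fun n => (c n).decZ, h⟩

end Achievability

section MessageCounts

instance (n : ℕ) (R : ℝ) : NeZero (msgCount n R) :=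
  ⟨(Nat.ceil_pos.2 (by positivity)).ne'⟩

lemma msgCount_mul_le {k l n : ℕ} {R R' S : ℝ} (hR : 0 ≤ R) (hR' : 0 ≤ R')
    (h : k * R + l * R' + 2 ≤ n * S) : msgCount k R * msgCount l R' ≤ msgCount n S := by
  have ceil_le : ∀ {x : ℝ}, 0 ≤ x → (⌈(2 : ℝ) ^ x⌉₊ : ℝ) ≤ 2 ^ (x + 1) := fun {x} hx => by
    rw [Real.rpow_add two_pos, Real.rpow_one, mul_comm]
    exact (Nat.ceil_lt_two_mul <| by linarith [Real.one_le_rpow one_le_two hx]).le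
  have hreal : ((msgCount k R * msgCount l R' : ℕ) : ℝ) ≤ (2 : ℝ) ^ ((n : ℝ) * S) := calc
    _ ≤ (2 : ℝ) ^ ((k : ℝ) * R + 1) * 2 ^ ((l : ℝ) * R' + 1) := by
      push_cast
      exact mul_le_mul (ceil_le (by positivity)) (ceil_le (by positivity)) (by positivity)
        (by positivity)
    _ = 2 ^ ((k : ℝ) * R + l * R' + 2) := by rw [← Real.rpow_add two_pos]; ring_nf
    _ ≤ 2 ^ ((n : ℝ) * S) := Real.rpow_le_rpow_of_exponent_le one_le_two h
  exact_mod_cast hreal.trans (Nat.le_ceil _)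

end MessageCounts

section TimeSharingLengths

variable {a b : ℝ}

lemma floor_mul_le_self (ha : a ≤ 1) (n : ℕ) : ⌊a * n⌋₊ ≤ n :=
  Nat.floor_le_of_le <| by nlinarith [(n.cast_nonneg : (0 : ℝ) ≤ n)]

lemma cast_sub_floor_mul (ha : a ≤ 1) (n : ℕ) : ((n - ⌊a * n⌋₊ : ℕ) : ℝ) = n - ⌊a * n⌋₊ :=
  Nat.cast_sub (floor_mul_le_self ha n)

lemma eventually_msgCount_mul_le (ha : 0 ≤ a) (hb : 0 ≤ b) (hab : a + b = 1) {R R' δ : ℝ}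
    (hR : 0 ≤ R) (hR' : 0 ≤ R') (hδ : 0 < δ) :
    ∀ᶠ n : ℕ in atTop, msgCount ⌊a * n⌋₊ R * msgCount (n - ⌊a * n⌋₊) R' ≤
      msgCount n (a * R + b * R' + δ) := by
  filter_upwards [(tendsto_natCast_atTop_atTop.atTop_mul_const hδ).eventually_ge_atTop (R' + 2)]
    with n hn
  refine msgCount_mul_le hR hR' ?_
  have hsplit : a * n + b * n = n := by rw [← add_mul, hab, one_mul]
  have hK : (⌊a * n⌋₊ : ℝ) ≤ a * n := Nat.floor_le (by positivity)
  have hL : ((n - ⌊a * n⌋₊ : ℕ) : ℝ) ≤ b * n + 1 := by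
    rw [cast_sub_floor_mul (by linarith) n]
    linarith [Nat.lt_floor_add_one (a * n)]
  nlinarith [mul_le_mul_of_nonneg_right hK hR, mul_le_mul_of_nonneg_right hL hR']

lemma tendsto_sub_floor_mul_atTop (ha : 0 ≤ a) (hb : 0 < b) (hab : a + b = 1) :
    Tendsto (fun n : ℕ => n - ⌊a * n⌋₊) atTop atTop := by
  refine tendsto_natCast_atTop_iff.1 <| tendsto_atTop_mono (fun n => ?_)
    (tendsto_natCast_atTop_atTop.const_mul_atTop hb)
  have hsplit : a * n + b * n = n := by rw [← add_mul, hab, one_mul]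
  rw [cast_sub_floor_mul (by linarith) n]
  linarith [Nat.floor_le (by positivity : 0 ≤ a * n)]

end TimeSharingLengths

section TimeSharingCode

variable {𝒳 𝒴 𝒵 : Type} {R1 R2 R1' R2' : ℝ} {a : ℝ}

noncomputable def timeShareCode (ha : a ≤ 1)
    (c : (n : ℕ) → CascadeCode 𝒳 𝒴 𝒵 n (msgCount n R1) (msgCount n R2))
    (d : (n : ℕ) → CascadeCode 𝒳 𝒴 𝒵 n (msgCount n R1') (msgCount n R2')) (S1 S2 : ℝ) (n : ℕ) :
    CascadeCode 𝒳 𝒴 𝒵 n (msgCount n S1) (msgCount n S2) :=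
  (Nat.add_sub_cancel' (floor_mul_le_self ha n) ▸
    (c ⌊a * n⌋₊).append (d (n - ⌊a * n⌋₊))).resize _ _

variable (ha : a ≤ 1) {c : (n : ℕ) → CascadeCode 𝒳 𝒴 𝒵 n (msgCount n R1) (msgCount n R2)}
  {d : (n : ℕ) → CascadeCode 𝒳 𝒴 𝒵 n (msgCount n R1') (msgCount n R2')}

lemma isPMF_timeShareCode_pω (hc : ∀ n, IsPMF (c n).pω) (hd : ∀ n, IsPMF (d n).pω)
    (S1 S2 : ℝ) (n : ℕ) : IsPMF (timeShareCode ha c d S1 S2 n).pω :=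
  CascadeCode.isPMF_cast_pω _ (CascadeCode.isPMF_append_pω _ _ (hc _) (hd _))

variable [Fintype 𝒳] [Fintype 𝒴] [Fintype 𝒵]

lemma errProb_timeShareCode_le {p0 : 𝒳 → ℝ} (hp0 : IsPMF p0) (hc : ∀ n, IsPMF (c n).pω)
    (hd : ∀ n, IsPMF (d n).pω) {μ ν : 𝒳 × 𝒴 × 𝒵 → ℝ} (hμ : IsPMF μ) (hν : IsPMF ν)
    {S1 S2 ε : ℝ} {n : ℕ} (hn : 0 < n)
    (h1 : msgCount ⌊a * n⌋₊ R1 * msgCount (n - ⌊a * n⌋₊) R1' ≤ msgCount n S1)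
    (h2 : msgCount ⌊a * n⌋₊ R2 * msgCount (n - ⌊a * n⌋₊) R2' ≤ msgCount n S2)
    (hfrac : |(⌊a * n⌋₊ : ℝ) / n - a| ≤ ε / 3) :
    (timeShareCode ha c d S1 S2 n).errProb p0 ε (a • μ + (1 - a) • ν) ≤
      (c ⌊a * n⌋₊).errProb p0 (ε / 3) μ + (d (n - ⌊a * n⌋₊)).errProb p0 (ε / 3) ν := by
  have hsum := Nat.add_sub_cancel' (floor_mul_le_self ha n)
  rw [timeShareCode, CascadeCode.errProb_resize _ h1 h2, CascadeCode.errProb_cast]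
  exact CascadeCode.errProb_append_le _ _ hp0 (hc _) (hd _) hμ hν (by rwa [hsum]) (by rwa [hsum])

end TimeSharingCode

section TimeSharing

variable {𝒳 𝒴 𝒵 : Type} [Fintype 𝒳] [Fintype 𝒴] [Fintype 𝒵]

/-- The slack `δ` absorbs the rounding of message counts and of the block lengths. -/
theorem CascadeAchievableCR.timeShare {p0 : 𝒳 → ℝ} (hp0 : IsPMF p0) {R1 R2 R1' R2' : ℝ}
    {q q' : 𝒳 → 𝒴 × 𝒵 → ℝ} (hq : ∀ x, IsPMF (q x)) (hq' : ∀ x, IsPMF (q' x))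
    (hR1 : 0 ≤ R1) (hR2 : 0 ≤ R2) (hR1' : 0 ≤ R1') (hR2' : 0 ≤ R2')
    {a b : ℝ} (ha : 0 < a) (hb : 0 < b) (hab : a + b = 1) {δ : ℝ} (hδ : 0 < δ)
    (h : CascadeAchievableCR p0 R1 R2 q) (h' : CascadeAchievableCR p0 R1' R2' q') :
    CascadeAchievableCR p0 (a * R1 + b * R1' + δ) (a * R2 + b * R2' + δ) (a • q + b • q') := by
  obtain ⟨c, hc, hc_err⟩ := cascadeAchievableCR_iff.1 h
  obtain ⟨d, hd, hd_err⟩ := cascadeAchievableCR_iff.1 h'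
  have ha1 : a ≤ 1 := by linarith
  refine cascadeAchievableCR_iff.2 ⟨timeShareCode ha1 c d _ _,
    isPMF_timeShareCode_pω ha1 hc hd _ _, fun ε hε => ?_⟩
  have hmix : (fun x : 𝒳 × 𝒴 × 𝒵 => p0 x.1 * (a • q + b • q') x.1 x.2) =
      a • (fun x => p0 x.1 * q x.1 x.2) + (1 - a) • fun x => p0 x.1 * q' x.1 x.2 := by
    funext x
    simp only [Pi.add_apply, Pi.smul_apply, smul_eq_mul, ← hab]
    ring
  have hfrac : ∀ᶠ n : ℕ in atTop, |(⌊a * n⌋₊ : ℝ) / n - a| ≤ ε / 3 :=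
    ((tendsto_nat_floor_mul_div_atTop ha.le).comp tendsto_natCast_atTop_atTop).eventually
      (Metric.closedBall_mem_nhds a (by positivity))
  have hbound := ((hc_err (ε / 3) (by positivity)).comp
    (tendsto_nat_floor_atTop.comp (tendsto_natCast_atTop_atTop.const_mul_atTop ha))).add
    ((hd_err (ε / 3) (by positivity)).comp (tendsto_sub_floor_mul_atTop ha.le hb hab))
  rw [add_zero] at hbound
  rw [hmix]
  refine squeeze_zero' (Eventually.of_forall fun n => CascadeCode.errProb_nonneg _ hp0
    (isPMF_timeShareCode_pω ha1 hc hd _ _ n) _ _) ?_ hbound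
  filter_upwards [eventually_msgCount_mul_le ha.le hb.le hab hR1 hR1' hδ,
    eventually_msgCount_mul_le ha.le hb.le hab hR2 hR2' hδ, eventually_gt_atTop 0, hfrac]
    with n h1 h2 hn hfrac_n
  exact errProb_timeShareCode_le ha1 hp0 hc hd (hp0.joint hq) (hp0.joint hq') hn h1 h2 hfrac_n

end TimeSharing

section Convexity

variable {𝕜 E F : Type*} [Semiring 𝕜] [PartialOrder 𝕜] [AddCommMonoid E]

lemma Convex.preimage_of_map_convexComb [AddCommMonoid F] [SMul 𝕜 E] [SMul 𝕜 F] {s : Set F}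
    (hs : Convex 𝕜 s) {f : E → F}
    (hf : ∀ x y (a b : 𝕜), 0 ≤ a → 0 ≤ b → a + b = 1 → f (a • x + b • y) = a • f x + b • f y) :
    Convex 𝕜 (f ⁻¹' s) := fun x hx y hy a b ha hb hab => by
  rw [Set.mem_preimage, hf x y a b ha hb hab]
  exact hs hx hy ha hb hab

lemma convex_closure_of_convexComb_mem_closure [Module 𝕜 E] [TopologicalSpace E]
    [ContinuousAdd E] [ContinuousConstSMul 𝕜 E] {s : Set E}
    (h : ∀ x ∈ s, ∀ y ∈ s, ∀ a b : 𝕜, 0 < a → 0 < b → a + b = 1 → a • x + b • y ∈ closure s) :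
    Convex 𝕜 (closure s) := by
  refine convex_iff_pairwise_pos.2 fun x hx y hy _ a b ha hb hab => ?_
  simpa only [closure_closure] using map_mem_closure₂' (f := fun x y => a • x + b • y)
    (fun _ => continuous_const.add (continuous_const_smul b))
    (fun _ => (continuous_const_smul a).add continuous_const) hx hy
    fun x hx y hy => h x hx y hy a b ha hb hab

end Convexity

section CapacityRegion

variable {𝒳 𝒴 𝒵 : Type} [Fintype 𝒳] [Fintype 𝒴] [Fintype 𝒵]

def cascadeAchievableSet (p0 : 𝒳 → ℝ) : Set (ℝ × ℝ × (𝒳 → 𝒴 × 𝒵 → ℝ)) :=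
  {v | 0 ≤ v.1 ∧ 0 ≤ v.2.1 ∧ (∀ x, IsPMF (v.2.2 x)) ∧ CascadeAchievableCR p0 v.1 v.2.1 v.2.2}

lemma cascadeCapacityCR_eq_closure (p0 : 𝒳 → ℝ) :
    cascadeCapacityCR p0 = closure (cascadeAchievableSet (𝒴 := 𝒴) (𝒵 := 𝒵) p0) :=
  rfl

lemma convexComb_mem_closure_cascadeAchievableSet {p0 : 𝒳 → ℝ} (hp0 : IsPMF p0)
    {u v : ℝ × ℝ × (𝒳 → 𝒴 × 𝒵 → ℝ)} (hu : u ∈ cascadeAchievableSet p0)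
    (hv : v ∈ cascadeAchievableSet p0) {a b : ℝ} (ha : 0 < a) (hb : 0 < b) (hab : a + b = 1) :
    a • u + b • v ∈ closure (cascadeAchievableSet p0) := by
  obtain ⟨R1, R2, q⟩ := u
  obtain ⟨R1', R2', q'⟩ := v
  obtain ⟨hR1, hR2, hq, hach⟩ : 0 ≤ R1 ∧ 0 ≤ R2 ∧ (∀ x, IsPMF (q x)) ∧
    CascadeAchievableCR p0 R1 R2 q := hu
  obtain ⟨hR1', hR2', hq', hach'⟩ : 0 ≤ R1' ∧ 0 ≤ R2' ∧ (∀ x, IsPMF (q' x)) ∧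
    CascadeAchievableCR p0 R1' R2' q' := hv
  have hslack :
      Continuous fun δ : ℝ => (a * R1 + b * R1' + δ, a * R2 + b * R2' + δ, a • q + b • q') :=
    (continuous_const.add continuous_id).prodMk
      ((continuous_const.add continuous_id).prodMk continuous_const)
  have hlim := (hslack.tendsto' 0 (a • (R1, R2, q) + b • (R1', R2', q')) (by simp)).mono_left
    (nhdsWithin_le_nhds (s := Set.Ioi 0))
  refine mem_closure_of_tendsto hlim (eventually_nhdsWithin_of_forall fun δ (hδ : 0 < δ) => ?_)
  exact ⟨by positivity, by positivity, fun x => (hq x).convexComb (hq' x) ha.le hb.le hab,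
    hach.timeShare hp0 hq hq' hR1 hR2 hR1' hR2' ha hb hab hδ hach'⟩

end CapacityRegion

/-- The coordination capacity region of the cascade network is convex; consequently the
rate–coordination region (fixed conditional pmf) and the coordination–rate region
(fixed rate pair) are convex. -/
theorem cascade_regions_convex {𝒳 𝒴 𝒵 : Type} [Fintype 𝒳] [Fintype 𝒴] [Fintype 𝒵]
    (p0 : 𝒳 → ℝ) (hp0 : IsPMF p0) :
    Convex ℝ (cascadeCapacityCR (𝒴 := 𝒴) (𝒵 := 𝒵) p0) ∧
    (∀ q : 𝒳 → 𝒴 × 𝒵 → ℝ,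
      Convex ℝ {r : ℝ × ℝ | (r.1, r.2, q) ∈ cascadeCapacityCR p0}) ∧
    (∀ R1 R2 : ℝ,
      Convex ℝ {q : 𝒳 → 𝒴 × 𝒵 → ℝ | (R1, R2, q) ∈ cascadeCapacityCR p0}) := by
  have hC : Convex ℝ (cascadeCapacityCR (𝒴 := 𝒴) (𝒵 := 𝒵) p0) := by
    rw [cascadeCapacityCR_eq_closure]
    exact convex_closure_of_convexComb_mem_closure fun u hu v hv a b ha hb hab =>
      convexComb_mem_closure_cascadeAchievableSet hp0 hu hv ha hb hab
  refine ⟨hC, fun q => hC.preimage_of_map_convexComb fun r s a b _ _ hab => ?_,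
    fun R1 R2 => hC.preimage_of_map_convexComb fun q q' a b _ _ hab => ?_⟩
  · simp [← add_smul, hab]
  · simp [← add_mul, hab]
end

section
/- (Outer bound for the broadcast network.) For the broadcast network with source distribution p0(x), every triple (R1, R2, p(y,z|x)) in the coordination capacity region C_{p0} satisfies R1 ≥ I(X;Y), R2 ≥ I(X;Z), and R1 + R2 ≥ I(X;Y,Z), where the mutual informations are computed under the joint distribution p0(x)p(y,z|x). -/
open Filter

/-- Achievability of `p(y,z|x)` at rates `(R1,R2)` in the broadcast network. -/
def BroadcastAchievable {𝒳 𝒴 𝒵 : Type} [Fintype 𝒳] [Fintype 𝒴] [Fintype 𝒵]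
    (p0 : 𝒳 → ℝ) (R1 R2 : ℝ) (q : 𝒳 → 𝒴 × 𝒵 → ℝ) : Prop :=
  ∃ i : (n : ℕ) → (Fin n → 𝒳) → Fin (msgCount n R1),
  ∃ j : (n : ℕ) → (Fin n → 𝒳) → Fin (msgCount n R2),
  ∃ decY : (n : ℕ) → Fin (msgCount n R1) → (Fin n → 𝒴),
  ∃ decZ : (n : ℕ) → Fin (msgCount n R2) → (Fin n → 𝒵),
    ∀ ε > 0,
      Tendsto (fun n => probOf (fun xs : Fin n → 𝒳 => ∏ t, p0 (xs t)) fun xs =>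
          ε ≤ tv (jointType n fun t => (xs t, decY n (i n xs) t, decZ n (j n xs) t))
              (fun a => p0 a.1 * q a.1 a.2)) atTop (nhds 0)

/-- Coordination capacity region of the broadcast network. -/
def broadcastCapacity {𝒳 𝒴 𝒵 : Type} [Fintype 𝒳] [Fintype 𝒴] [Fintype 𝒵] (p0 : 𝒳 → ℝ) :
    Set (ℝ × ℝ × (𝒳 → 𝒴 × 𝒵 → ℝ)) :=
  closure {v | 0 ≤ v.1 ∧ 0 ≤ v.2.1 ∧ (∀ x, IsPMF (v.2.2 x)) ∧
    BroadcastAchievable p0 v.1 v.2.1 v.2.2}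

/-!
Fix a code whose encoder `e` takes `X^n` (i.i.d. `p0`) to a message in a set `T` and whose
decoder outputs `B^n = d(e(X^n))`, and let `ν` be the time-averaged distribution of `(X_t, B_t)`.
Gibbs' inequality for the law of `X^n` against the sub-probability
`q(x^n) = P(e(X^n) = e(x^n)) * ∏_t ν(x_t, b_t) / ν(b_t)` (with `b^n = d(e(x^n))`) gives
`n H(X) = H(X^n) ≤ H(e(X^n)) + n H_ν(X|B) ≤ log |T| + n H_ν(X|B)`, that is
`I_ν(X;B) ≤ log |T| / n`. The distribution `ν` is the expected joint type, so convergence of the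
joint type in probability drives `ν` to the target distribution, and continuity of mutual
information turns the bound into `I(X;B) ≤ R`. The three inequalities are the cases `B = Y`
(message `i`), `B = Z` (message `j`) and `B = (Y,Z)` (message `(i,j)`); they define a closed set of
triples, which therefore contains the closure of the achievable ones.
-/

open Real Finset Topology

section PushForward

variable {S α β : Type} [Fintype S]

theorem IsPMF.le_one [Fintype α] {p : α → ℝ} (hp : IsPMF p) (a : α) : p a ≤ 1 :=
  hp.2 ▸ single_le_sum (fun b _ => hp.1 b) (mem_univ a)

theorem IsPMF.nonempty [Fintype α] {p : α → ℝ} (hp : IsPMF p) : Nonempty α := by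
  by_contra h
  simp [not_nonempty_iff.1 h, IsPMF] at hp

theorem pmfMap_nonneg {p : S → ℝ} (hp : ∀ s, 0 ≤ p s) (f : S → α) (a : α) :
    0 ≤ pmfMap p f a :=
  sum_nonneg fun s _ => by split_ifs <;> simp [hp s]

theorem sum_pmfMap_mul [Fintype α] (p : S → ℝ) (f : S → α) (F : α → ℝ) :
    ∑ a, pmfMap p f a * F a = ∑ s, p s * F (f s) := by
  classical
  simp only [pmfMap, sum_mul, ite_mul, zero_mul]
  rw [sum_comm]
  simp only [sum_ite_eq, mem_univ, if_true]

theorem sum_pmfMap [Fintype α] (p : S → ℝ) (f : S → α) : ∑ a, pmfMap p f a = ∑ s, p s := by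
  simpa using sum_pmfMap_mul p f fun _ => 1

theorem IsPMF.pmfMap [Fintype α] {p : S → ℝ} (hp : IsPMF p) (f : S → α) : IsPMF (pmfMap p f) :=
  ⟨pmfMap_nonneg hp.1 f, (sum_pmfMap p f).trans hp.2⟩

theorem le_pmfMap_apply {p : S → ℝ} (hp : ∀ s, 0 ≤ p s) (f : S → α) (s : S) :
    p s ≤ pmfMap p f (f s) := by
  classical
  calc p s = if f s = f s then p s else 0 := by simp
    _ ≤ pmfMap p f (f s) :=
      single_le_sum (f := fun s' => if f s' = f s then p s' else 0)
        (fun s' _ => by split_ifs <;> simp [hp s']) (mem_univ s)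

theorem pmfMap_pmfMap [Fintype α] (p : S → ℝ) (f : S → α) (g : α → β) :
    pmfMap (pmfMap p f) g = pmfMap p (g ∘ f) := by
  classical
  funext b
  simpa [pmfMap, mul_ite] using sum_pmfMap_mul p f fun a => if g a = b then (1 : ℝ) else 0

theorem pmfMap_snd_apply [Fintype α] [Fintype β] (P : α × β → ℝ) (b : β) :
    pmfMap P Prod.snd b = ∑ a, P (a, b) := by
  classical
  simp [pmfMap, Fintype.sum_prod_type]

theorem continuous_pmfMap (f : S → α) : Continuous fun p : S → ℝ => pmfMap p f := by
  refine continuous_pi fun a => continuous_finsetSum _ fun s _ => ?_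
  split_ifs
  exacts [continuous_apply s, continuous_const]

end PushForward

section Entropy

variable {S α β : Type} [Fintype S] [Fintype α] [Fintype β]

noncomputable def entropy (p : α → ℝ) : ℝ := ∑ a, negMulLog (p a)

theorem H2_eq_entropy_div (p : α → ℝ) : H2 p = entropy p / log 2 := by
  simp only [H2, entropy, sum_div, negMulLog, logb]
  congr! 1 with a
  ring

theorem continuous_entropy : Continuous (entropy : (α → ℝ) → ℝ) :=
  continuous_finsetSum _ fun a _ => continuous_negMulLog.comp (continuous_apply a)

theorem entropy_eq_sum_mul_neg_log (p : α → ℝ) : entropy p = ∑ a, p a * -log (p a) := by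
  simp [entropy, negMulLog]

theorem entropy_pmfMap (p : S → ℝ) (f : S → α) :
    entropy (pmfMap p f) = ∑ s, p s * -log (pmfMap p f (f s)) := by
  rw [entropy_eq_sum_mul_neg_log, sum_pmfMap_mul p f fun a => -log (pmfMap p f a)]

theorem entropy_le_sum_mul_neg_log {p q : α → ℝ} (hp : IsPMF p) (hq : ∀ a, 0 ≤ q a)
    (hq1 : ∑ a, q a ≤ 1) (hpq : ∀ a, 0 < p a → 0 < q a) :
    entropy p ≤ ∑ a, p a * -log (q a) := by
  have key : ∀ a, negMulLog (p a) - p a * -log (q a) ≤ q a - p a := by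
    intro a
    rcases (hp.1 a).eq_or_lt with hpa | hpa
    · simp [← hpa, hq a]
    · have hqa := hpq a hpa
      have hlog : log (q a) - log (p a) ≤ q a / p a - 1 := by
        rw [← log_div hqa.ne' hpa.ne']
        exact log_le_sub_one_of_pos (div_pos hqa hpa)
      calc negMulLog (p a) - p a * -log (q a) = p a * (log (q a) - log (p a)) := by
            rw [negMulLog]; ring
        _ ≤ p a * (q a / p a - 1) := mul_le_mul_of_nonneg_left hlog hpa.le
        _ = q a - p a := by field_simp
  have := sum_le_sum fun a (_ : a ∈ univ) => key a
  rw [sum_sub_distrib, sum_sub_distrib, hp.2] at this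
  rw [entropy]
  linarith

theorem entropy_le_log_card {p : α → ℝ} (hp : IsPMF p) : entropy p ≤ log (Fintype.card α) := by
  have hcard : (0 : ℝ) < Fintype.card α := by
    have := hp.nonempty
    exact_mod_cast Fintype.card_pos
  calc entropy p ≤ ∑ a, p a * -log (Fintype.card α : ℝ)⁻¹ :=
        entropy_le_sum_mul_neg_log hp (fun _ => by positivity)
          (by simp [hcard.ne']) fun _ _ => by positivity
    _ = log (Fintype.card α) := by rw [log_inv, neg_neg, ← sum_mul, hp.2, one_mul]

noncomputable def condEntropy (P : α × β → ℝ) : ℝ := entropy P - entropy (pmfMap P Prod.snd)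

noncomputable def mutualInfo (P : α × β → ℝ) : ℝ :=
  entropy (pmfMap P Prod.fst) + entropy (pmfMap P Prod.snd) - entropy P

theorem condEntropy_eq_sum (P : α × β → ℝ) :
    condEntropy P = ∑ c, P c * (log (pmfMap P Prod.snd c.2) - log (P c)) := by
  rw [condEntropy, entropy_pmfMap, entropy_eq_sum_mul_neg_log, ← sum_sub_distrib]
  congr! 1 with c
  ring

theorem mutualInfo_eq_entropy_sub_condEntropy (P : α × β → ℝ) :
    mutualInfo P = entropy (pmfMap P Prod.fst) - condEntropy P := by
  rw [mutualInfo, condEntropy]; ring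

theorem continuous_mutualInfo : Continuous (mutualInfo : (α × β → ℝ) → ℝ) :=
  ((continuous_entropy.comp (continuous_pmfMap _)).add
    (continuous_entropy.comp (continuous_pmfMap _))).sub continuous_entropy

theorem MI_eq_mutualInfo_div (p : S → ℝ) (f : S → α) (g : S → β) :
    MI p f g = mutualInfo (pmfMap p fun s => (f s, g s)) / log 2 := by
  simp only [MI, mutualInfo, pmfMap_pmfMap, Function.comp_def, H2_eq_entropy_div]
  ring

@[fun_prop]
theorem Continuous.MI {E : Type} [TopologicalSpace E] {P : E → S → ℝ} (hP : Continuous P)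
    (f : S → α) (g : S → β) : Continuous fun x => MI (P x) f g := by
  simp only [MI_eq_mutualInfo_div]
  exact ((continuous_mutualInfo.comp (continuous_pmfMap _)).comp hP).div_const _

end Entropy

section Memoryless

variable {ι 𝒳 : Type} [Fintype ι] [DecidableEq ι] [Fintype 𝒳]

noncomputable def iidPMF (p0 : 𝒳 → ℝ) : (ι → 𝒳) → ℝ := fun s => ∏ t, p0 (s t)

theorem isPMF_iidPMF {p0 : 𝒳 → ℝ} (hp0 : IsPMF p0) : IsPMF (iidPMF p0 : (ι → 𝒳) → ℝ) := by
  refine ⟨fun s => prod_nonneg fun t _ => hp0.1 (s t), ?_⟩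
  simp [iidPMF, ← Fintype.prod_sum, hp0.2]

theorem pmfMap_iidPMF_eval {p0 : 𝒳 → ℝ} (hp0 : IsPMF p0) (t : ι) :
    pmfMap (iidPMF p0) (fun s => s t) = p0 := by
  classical
  funext x
  let h : ι → 𝒳 → ℝ := fun u y => if u = t then (if y = x then p0 y else 0) else p0 y
  have hfactor : ∀ s : ι → 𝒳, (if s t = x then iidPMF p0 s else 0) = ∏ u, h u (s u) := by
    intro s
    by_cases hst : s t = x
    · rw [if_pos hst, iidPMF]
      refine prod_congr rfl fun u _ => ?_
      by_cases hut : u = t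
      · subst hut; simp [h, hst]
      · simp [h, hut]
    · rw [if_neg hst]
      exact (prod_eq_zero (mem_univ t) (by simp [h, hst])).symm
  calc pmfMap (iidPMF p0) (fun s => s t) x = ∑ s : ι → 𝒳, ∏ u, h u (s u) :=
        sum_congr rfl fun s _ => hfactor s
    _ = ∏ u, ∑ y, h u y := (Fintype.prod_sum h).symm
    _ = p0 x := by simp [h, hp0.2]

theorem entropy_iidPMF {p0 : 𝒳 → ℝ} (hp0 : IsPMF p0) :
    entropy (iidPMF p0 : (ι → 𝒳) → ℝ) = Fintype.card ι * entropy p0 := by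
  have hlog : ∀ s : ι → 𝒳,
      iidPMF p0 s * -log (iidPMF p0 s) = ∑ t, iidPMF p0 s * -log (p0 (s t)) := by
    intro s
    rcases eq_or_ne (iidPMF p0 s) 0 with h | h
    · simp [h]
    · rw [← mul_sum, sum_neg_distrib, iidPMF,
        log_prod fun t _ => prod_ne_zero_iff.1 h t (mem_univ t)]
  calc entropy (iidPMF p0 : (ι → 𝒳) → ℝ)
      = ∑ t, ∑ s : ι → 𝒳, iidPMF p0 s * -log (p0 (s t)) := by
        rw [entropy_eq_sum_mul_neg_log, sum_congr rfl fun s _ => hlog s, sum_comm]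
    _ = ∑ _t : ι, entropy p0 := by
        congr! 1 with t
        rw [← sum_pmfMap_mul (iidPMF p0) (fun s => s t) fun x => -log (p0 x),
          pmfMap_iidPMF_eval hp0, entropy_eq_sum_mul_neg_log]
    _ = Fintype.card ι * entropy p0 := by simp

end Memoryless

section AvgMarginal

variable {S ι α β : Type} [Fintype S] [Fintype ι]

noncomputable def avgMarginal (μ : S → ℝ) (w : S → ι → α) : α → ℝ :=
  fun c => (∑ t, pmfMap μ (fun s => w s t) c) / Fintype.card ι

theorem avgMarginal_nonneg {μ : S → ℝ} (hμ : ∀ s, 0 ≤ μ s) (w : S → ι → α) (c : α) :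
    0 ≤ avgMarginal μ w c :=
  div_nonneg (sum_nonneg fun _ _ => pmfMap_nonneg hμ _ c) (Nat.cast_nonneg _)

theorem div_card_le_avgMarginal {μ : S → ℝ} (hμ : ∀ s, 0 ≤ μ s) (w : S → ι → α) (s : S) (t : ι) :
    μ s / Fintype.card ι ≤ avgMarginal μ w (w s t) :=
  div_le_div_of_nonneg_right ((le_pmfMap_apply hμ (fun s => w s t) s).trans
    (single_le_sum (f := fun t' => pmfMap μ (fun s => w s t') (w s t))
      (fun _ _ => pmfMap_nonneg hμ _ _) (mem_univ t))) (Nat.cast_nonneg _)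

theorem pmfMap_avgMarginal [Fintype α] (μ : S → ℝ) (w : S → ι → α) (φ : α → β) :
    pmfMap (avgMarginal μ w) φ = avgMarginal μ fun s t => φ (w s t) := by
  funext b
  calc pmfMap (avgMarginal μ w) φ b
      = (∑ t, pmfMap (pmfMap μ fun s => w s t) φ b) / Fintype.card ι := by
        simp only [pmfMap, avgMarginal]
        rw [sum_comm, sum_div]
        refine sum_congr rfl fun c _ => ?_
        split_ifs <;> simp
    _ = avgMarginal μ (fun s t => φ (w s t)) b := by
        simp only [pmfMap_pmfMap, avgMarginal, Function.comp_def]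

theorem card_mul_sum_avgMarginal_mul [Fintype α] (μ : S → ℝ) (w : S → ι → α) (G : α → ℝ) :
    Fintype.card ι * ∑ c, avgMarginal μ w c * G c = ∑ t, ∑ s, μ s * G (w s t) := by
  rcases isEmpty_or_nonempty ι with hι | hι
  · simp
  · simp only [avgMarginal, div_mul_eq_mul_div, ← sum_div, sum_mul]
    rw [mul_div_cancel₀ _ (Nat.cast_ne_zero.2 Fintype.card_ne_zero), sum_comm]
    exact sum_congr rfl fun t _ => sum_pmfMap_mul μ _ G

end AvgMarginal

section SingleLetter

variable {ι 𝒳 B T : Type} [Fintype ι] [DecidableEq ι] [Fintype 𝒳] [Fintype B] [Fintype T]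

theorem sum_pmfMap_mul_prod_le_one {μ : (ι → 𝒳) → ℝ} (hμ : IsPMF μ) (e : (ι → 𝒳) → T)
    {r : T → ι → 𝒳 → ℝ} (hr : ∀ τ t x, 0 ≤ r τ t x) (hr1 : ∀ τ t, ∑ x, r τ t x ≤ 1) :
    ∑ s, pmfMap μ e (e s) * ∏ t, r (e s) t (s t) ≤ 1 := by
  classical
  rw [← sum_fiberwise univ e, ← hμ.2, ← sum_pmfMap μ e]
  refine sum_le_sum fun τ _ => ?_
  calc ∑ s ∈ univ with e s = τ, pmfMap μ e (e s) * ∏ t, r (e s) t (s t)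
      = pmfMap μ e τ * ∑ s ∈ univ with e s = τ, ∏ t, r τ t (s t) := by
        rw [mul_sum]
        exact sum_congr rfl fun s hs => by rw [(mem_filter.1 hs).2]
    _ ≤ pmfMap μ e τ * ∏ t, ∑ x, r τ t x := by
        rw [Fintype.prod_sum]
        exact mul_le_mul_of_nonneg_left (sum_le_sum_of_subset_of_nonneg (filter_subset _ _)
          fun s _ _ => prod_nonneg fun t _ => hr _ _ _) (pmfMap_nonneg hμ.1 _ _)
    _ ≤ pmfMap μ e τ :=
        mul_le_of_le_one_right (pmfMap_nonneg hμ.1 _ _)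
          (prod_le_one (fun t _ => sum_nonneg fun x _ => hr τ t x) fun t _ => hr1 τ t)

theorem entropy_le_entropy_pmfMap_add_card_mul_condEntropy {μ : (ι → 𝒳) → ℝ} (hμ : IsPMF μ)
    (e : (ι → 𝒳) → T) (d : T → ι → B) :
    entropy μ ≤ entropy (pmfMap μ e) +
      Fintype.card ι * condEntropy (avgMarginal μ fun s t => (s t, d (e s) t)) := by
  set ν := avgMarginal μ fun s t => (s t, d (e s) t)
  have hν : ∀ c, 0 ≤ ν c := avgMarginal_nonneg hμ.1 _
  let r : T → ι → 𝒳 → ℝ := fun τ t x => ν (x, d τ t) / pmfMap ν Prod.snd (d τ t)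
  have hr : ∀ τ t x, 0 ≤ r τ t x := fun τ t x => div_nonneg (hν _) (pmfMap_nonneg hν _ _)
  have hr1 : ∀ τ t, ∑ x, r τ t x ≤ 1 := fun τ t => by
    simp only [r, ← sum_div, ← pmfMap_snd_apply]
    exact div_self_le_one _
  have hpos : ∀ s, 0 < μ s → 0 < pmfMap μ e (e s) ∧
      ∀ t, 0 < ν (s t, d (e s) t) ∧ 0 < pmfMap ν Prod.snd (d (e s) t) := by
    intro s hs
    refine ⟨hs.trans_le (le_pmfMap_apply hμ.1 e s), fun t => ?_⟩
    have hνs : 0 < ν (s t, d (e s) t) := (div_pos hs (Nat.cast_pos.2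
      (Fintype.card_pos_iff.2 ⟨t⟩))).trans_le (div_card_le_avgMarginal hμ.1 _ s t)
    exact ⟨hνs, hνs.trans_le (le_pmfMap_apply hν Prod.snd _)⟩
  have hrpos : ∀ s, 0 < μ s → ∀ t, 0 < r (e s) t (s t) := fun s hs t =>
    div_pos ((hpos s hs).2 t).1 ((hpos s hs).2 t).2
  have hcross : ∀ s, μ s * -log (pmfMap μ e (e s) * ∏ t, r (e s) t (s t)) =
      μ s * -log (pmfMap μ e (e s)) +
        ∑ t, μ s * (log (pmfMap ν Prod.snd (d (e s) t)) - log (ν (s t, d (e s) t))) := by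
    intro s
    rcases (hμ.1 s).eq_or_lt with hs | hs
    · simp [← hs]
    obtain ⟨hm, hνs⟩ := hpos s hs
    rw [log_mul hm.ne' (prod_pos fun t _ => hrpos s hs t).ne',
      log_prod fun t _ => (hrpos s hs t).ne', ← mul_sum, ← mul_add]
    simp only [r, log_div (hνs _).1.ne' (hνs _).2.ne']
    rw [neg_add, ← sum_neg_distrib]
    simp only [neg_sub]
  calc entropy μ ≤ ∑ s, μ s * -log (pmfMap μ e (e s) * ∏ t, r (e s) t (s t)) :=
        entropy_le_sum_mul_neg_log hμ
          (fun s => mul_nonneg (pmfMap_nonneg hμ.1 _ _) (prod_nonneg fun t _ => hr _ _ _))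
          (sum_pmfMap_mul_prod_le_one hμ e hr hr1)
          fun s hs => mul_pos (hpos s hs).1 (prod_pos fun t _ => hrpos s hs t)
    _ = entropy (pmfMap μ e) + Fintype.card ι * condEntropy ν := by
        rw [sum_congr rfl fun s _ => hcross s, sum_add_distrib, ← entropy_pmfMap, sum_comm,
          condEntropy_eq_sum, card_mul_sum_avgMarginal_mul]

end SingleLetter

theorem mutualInfo_avgMarginal_le {𝒳 B T : Type} [Fintype 𝒳] [Fintype B] [Fintype T]
    {p0 : 𝒳 → ℝ} (hp0 : IsPMF p0) {n : ℕ} (hn : 0 < n)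
    (e : (Fin n → 𝒳) → T) (d : T → Fin n → B) :
    mutualInfo (avgMarginal (iidPMF p0) fun s t => (s t, d (e s) t)) ≤
      log (Fintype.card T) / n := by
  have hμ := isPMF_iidPMF (ι := Fin n) hp0
  have hfst : pmfMap (avgMarginal (iidPMF p0) fun s t => (s t, d (e s) t)) Prod.fst = p0 := by
    funext x
    simp only [pmfMap_avgMarginal, avgMarginal, pmfMap_iidPMF_eval hp0, sum_const, card_univ,
      Fintype.card_fin, nsmul_eq_mul]
    field_simp
  have hkey := entropy_le_entropy_pmfMap_add_card_mul_condEntropy hμ e d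
  rw [entropy_iidPMF hp0, Fintype.card_fin] at hkey
  have hlog := entropy_le_log_card (hμ.pmfMap e)
  rw [mutualInfo_eq_entropy_sub_condEntropy, hfst, le_div_iff₀ (Nat.cast_pos.2 hn)]
  linarith

section Typicality

variable {S α : Type} [Fintype S]

theorem isPMF_jointType [Fintype α] {n : ℕ} (hn : 0 < n) (s : Fin n → α) :
    IsPMF (jointType n s) := by
  classical
  refine ⟨fun a => by unfold jointType; positivity, ?_⟩
  simp only [jointType, ← sum_div]
  rw [← Nat.cast_sum, ← card_eq_sum_card_fiberwise fun t _ => mem_univ (s t), card_univ,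
    Fintype.card_fin, div_self (Nat.cast_ne_zero.2 hn.ne')]

theorem avgMarginal_eq_sum_mul_jointType {n : ℕ} (μ : S → ℝ) (w : S → Fin n → α) (c : α) :
    avgMarginal μ w c = ∑ s, μ s * jointType n (w s) c := by
  simp only [avgMarginal, jointType, pmfMap, natCast_card_filter, Fintype.card_fin, mul_div_assoc',
    mul_sum, mul_ite, mul_one, mul_zero, ← sum_div]
  rw [sum_comm]

theorem abs_sub_le_of_isPMF [Fintype α] {p q : α → ℝ} (hp : IsPMF p) (hq : IsPMF q) {ε : ℝ}
    (hε : 0 ≤ ε) (a : α) : |p a - q a| ≤ 2 * ε + if ε ≤ tv p q then 1 else 0 := by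
  split_ifs with h
  · have : |p a - q a| ≤ 1 :=
      abs_sub_le_iff.2 ⟨by linarith [hp.le_one a, hq.1 a], by linarith [hq.le_one a, hp.1 a]⟩
    linarith
  · have : |p a - q a| ≤ 2 * tv p q := by
      rw [tv]
      linarith [single_le_sum (f := fun b => |p b - q b|) (fun b _ => abs_nonneg _) (mem_univ a)]
    linarith [not_le.1 h]

theorem abs_sum_mul_sub_le [Fintype α] {μ : S → ℝ} (hμ : IsPMF μ) {f : S → α → ℝ}
    (hf : ∀ s, IsPMF (f s)) {τ : α → ℝ} (hτ : IsPMF τ) {ε : ℝ} (hε : 0 ≤ ε) (a : α) :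
    |∑ s, μ s * f s a - τ a| ≤ 2 * ε + probOf μ fun s => ε ≤ tv (f s) τ := by
  calc |∑ s, μ s * f s a - τ a| = |∑ s, μ s * (f s a - τ a)| := by
        simp only [mul_sub, sum_sub_distrib, ← sum_mul, hμ.2, one_mul]
    _ ≤ ∑ s, μ s * (2 * ε + if ε ≤ tv (f s) τ then 1 else 0) := by
        refine (abs_sum_le_sum_abs _ _).trans (sum_le_sum fun s _ => ?_)
        rw [abs_mul, abs_of_nonneg (hμ.1 s)]
        exact mul_le_mul_of_nonneg_left (abs_sub_le_of_isPMF (hf s) hτ hε a) (hμ.1 s)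
    _ = 2 * ε + probOf μ fun s => ε ≤ tv (f s) τ := by
        simp only [probOf, mul_add, sum_add_distrib, ← sum_mul, hμ.2, one_mul, mul_ite, mul_one,
          mul_zero, mul_comm (2 : ℝ)]

theorem tendsto_avgMarginal_of_tendsto_probOf [Fintype α] {Ω : ℕ → Type} [∀ n, Fintype (Ω n)]
    {μ : ∀ n, Ω n → ℝ} (hμ : ∀ n, IsPMF (μ n)) {τ : α → ℝ} (hτ : IsPMF τ)
    {w : ∀ n, Ω n → Fin n → α}
    (hw : ∀ ε > 0, Tendsto (fun n => probOf (μ n) fun s => ε ≤ tv (jointType n (w n s)) τ)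
      atTop (𝓝 0)) :
    Tendsto (fun n => avgMarginal (μ n) (w n)) atTop (𝓝 τ) := by
  refine tendsto_pi_nhds.2 fun c => Metric.tendsto_atTop.2 fun δ hδ => ?_
  obtain ⟨N, hN⟩ := Metric.tendsto_atTop.1 (hw (δ / 4) (by positivity)) (δ / 4) (by positivity)
  refine ⟨max N 1, fun n hn => ?_⟩
  have hprob := hN n (le_of_max_le_left hn)
  rw [Real.dist_eq, sub_zero] at hprob
  have hclose := abs_sum_mul_sub_le (hμ n)
    (fun s => isPMF_jointType (le_of_max_le_right hn) (w n s)) hτ (by positivity : 0 ≤ δ / 4) c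
  rw [Real.dist_eq, avgMarginal_eq_sum_mul_jointType]
  linarith [le_abs_self (probOf (μ n) fun s => δ / 4 ≤ tv (jointType n (w n s)) τ)]

end Typicality

theorem MI_le_of_codes {𝒳 A B : Type} [Fintype 𝒳] [Fintype A] [Fintype B] {p0 : 𝒳 → ℝ}
    (hp0 : IsPMF p0) {τ : 𝒳 × A → ℝ} (hτ : IsPMF τ) {w : (n : ℕ) → (Fin n → 𝒳) → Fin n → A}
    (hw : ∀ ε > 0, Tendsto (fun n => probOf (iidPMF p0) fun xs =>
      ε ≤ tv (jointType n fun t => (xs t, w n xs t)) τ) atTop (𝓝 0))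
    (ρ : A → B) {T : ℕ → Type} [∀ n, Fintype (T n)] (e : (n : ℕ) → (Fin n → 𝒳) → T n)
    (d : (n : ℕ) → T n → Fin n → B) (hρ : ∀ n xs t, ρ (w n xs t) = d n (e n xs) t) {R C : ℝ}
    (hT : ∀ n, (Fintype.card (T n) : ℝ) ≤ 2 ^ (n * R + C)) :
    MI τ (fun a => a.1) (fun a => ρ a.2) ≤ R := by
  obtain ⟨x0⟩ := hp0.nonempty
  have hν : ∀ n, (avgMarginal (iidPMF p0) fun xs t => (xs t, d n (e n xs) t)) =
      pmfMap (avgMarginal (iidPMF p0) fun xs t => (xs t, w n xs t)) fun a => (a.1, ρ a.2) := by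
    intro n
    rw [pmfMap_avgMarginal]
    simp only [hρ]
  have hlim : Tendsto
      (fun n => mutualInfo (avgMarginal (iidPMF p0) fun xs t => (xs t, d n (e n xs) t)))
      atTop (𝓝 (mutualInfo (pmfMap τ fun a => (a.1, ρ a.2)))) := by
    simp only [hν]
    exact ((continuous_mutualInfo.comp (continuous_pmfMap _)).tendsto τ).comp
      (tendsto_avgMarginal_of_tendsto_probOf (μ := fun n => iidPMF p0)
        (w := fun n xs t => (xs t, w n xs t)) (fun n => isPMF_iidPMF hp0) hτ hw)
  have hbound : ∀ n, 0 < n →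
      mutualInfo (avgMarginal (iidPMF p0) fun xs t => (xs t, d n (e n xs) t)) ≤
        R * log 2 + C * log 2 / n := by
    intro n hn
    have hcard : (0 : ℝ) < Fintype.card (T n) :=
      Nat.cast_pos.2 (Fintype.card_pos_iff.2 ⟨e n fun _ => x0⟩)
    calc _ ≤ log (Fintype.card (T n)) / n := mutualInfo_avgMarginal_le hp0 hn (e n) (d n)
      _ ≤ (n * R + C) * log 2 / n := by
          gcongr
          exact (log_le_log hcard (hT n)).trans_eq (log_rpow two_pos _)
      _ = R * log 2 + C * log 2 / n := by field_simp
  have hlim' : Tendsto (fun n : ℕ => R * log 2 + C * log 2 / n) atTop (𝓝 (R * log 2)) := by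
    simpa using tendsto_const_nhds.add
      (tendsto_const_nhds.div_atTop (tendsto_natCast_atTop_atTop (R := ℝ)))
  rw [MI_eq_mutualInfo_div, div_le_iff₀ (log_pos one_lt_two)]
  exact le_of_tendsto_of_tendsto hlim hlim' (eventually_atTop.2 ⟨1, fun n hn => hbound n hn⟩)

theorem msgCount_le {R : ℝ} (hR : 0 ≤ R) (n : ℕ) : (msgCount n R : ℝ) ≤ 2 ^ (n * R + 1) := by
  have h1 : (1 : ℝ) ≤ 2 ^ (n * R) := one_le_rpow one_le_two (by positivity)
  rw [msgCount, rpow_add_one two_ne_zero]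
  linarith [Nat.ceil_lt_add_one (zero_le_one.trans h1)]

theorem BroadcastAchievable.MI_le {𝒳 𝒴 𝒵 : Type} [Fintype 𝒳] [Fintype 𝒴] [Fintype 𝒵]
    {p0 : 𝒳 → ℝ} (hp0 : IsPMF p0) {R1 R2 : ℝ} (hR1 : 0 ≤ R1) (hR2 : 0 ≤ R2)
    {q : 𝒳 → 𝒴 × 𝒵 → ℝ} (hq : ∀ x, IsPMF (q x)) (h : BroadcastAchievable p0 R1 R2 q) :
    MI (fun a : 𝒳 × 𝒴 × 𝒵 => p0 a.1 * q a.1 a.2) (fun a => a.1) (fun a => a.2.1) ≤ R1 ∧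
    MI (fun a : 𝒳 × 𝒴 × 𝒵 => p0 a.1 * q a.1 a.2) (fun a => a.1) (fun a => a.2.2) ≤ R2 ∧
    MI (fun a : 𝒳 × 𝒴 × 𝒵 => p0 a.1 * q a.1 a.2) (fun a => a.1) (fun a => a.2)
      ≤ R1 + R2 := by
  obtain ⟨i, j, decY, decZ, hconv⟩ := h
  have hτ : IsPMF fun a : 𝒳 × 𝒴 × 𝒵 => p0 a.1 * q a.1 a.2 :=
    ⟨fun a => mul_nonneg (hp0.1 _) ((hq _).1 _), by
      simp [Fintype.sum_prod_type, ← mul_sum, (hq _).2, hp0.2]⟩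
  refine ⟨MI_le_of_codes hp0 hτ hconv Prod.fst i decY (fun _ _ _ => rfl) (C := 1)
      fun n => by simpa using msgCount_le hR1 n,
    MI_le_of_codes hp0 hτ hconv Prod.snd j decZ (fun _ _ _ => rfl) (C := 1)
      fun n => by simpa using msgCount_le hR2 n,
    MI_le_of_codes hp0 hτ hconv id (fun n xs => (i n xs, j n xs))
      (fun n m t => (decY n m.1 t, decZ n m.2 t)) (fun _ _ _ => rfl) (C := 2) fun n => ?_⟩
  calc (Fintype.card (Fin (msgCount n R1) × Fin (msgCount n R2)) : ℝ)
      = msgCount n R1 * msgCount n R2 := by simp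
    _ ≤ 2 ^ (n * R1 + 1) * 2 ^ (n * R2 + 1) :=
        mul_le_mul (msgCount_le hR1 n) (msgCount_le hR2 n) (Nat.cast_nonneg _) (by positivity)
    _ = 2 ^ (n * (R1 + R2) + 2) := by rw [← rpow_add two_pos]; ring_nf

/-- Outer bound for the broadcast network: every `(R1, R2, p(y,z|x))` in the coordination
capacity region satisfies `R1 ≥ I(X;Y)`, `R2 ≥ I(X;Z)` and `R1 + R2 ≥ I(X;Y,Z)`,
computed under `p0(x)p(y,z|x)`. -/
theorem broadcast_outer_bound {𝒳 𝒴 𝒵 : Type} [Fintype 𝒳] [Fintype 𝒴] [Fintype 𝒵]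
    (p0 : 𝒳 → ℝ) (hp0 : IsPMF p0) (R1 R2 : ℝ) (q : 𝒳 → 𝒴 × 𝒵 → ℝ)
    (h : (R1, R2, q) ∈ broadcastCapacity p0) :
    MI (fun a : 𝒳 × 𝒴 × 𝒵 => p0 a.1 * q a.1 a.2) (fun a => a.1) (fun a => a.2.1) ≤ R1 ∧
    MI (fun a : 𝒳 × 𝒴 × 𝒵 => p0 a.1 * q a.1 a.2) (fun a => a.1) (fun a => a.2.2) ≤ R2 ∧
    MI (fun a : 𝒳 × 𝒴 × 𝒵 => p0 a.1 * q a.1 a.2) (fun a => a.1) (fun a => a.2)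
      ≤ R1 + R2 := by
  have hclosed : IsClosed {v : ℝ × ℝ × (𝒳 → 𝒴 × 𝒵 → ℝ) |
      MI (fun a : 𝒳 × 𝒴 × 𝒵 => p0 a.1 * v.2.2 a.1 a.2) (fun a => a.1) (fun a => a.2.1) ≤ v.1 ∧
      MI (fun a : 𝒳 × 𝒴 × 𝒵 => p0 a.1 * v.2.2 a.1 a.2) (fun a => a.1) (fun a => a.2.2) ≤ v.2.1 ∧
      MI (fun a : 𝒳 × 𝒴 × 𝒵 => p0 a.1 * v.2.2 a.1 a.2) (fun a => a.1) (fun a => a.2)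
        ≤ v.1 + v.2.1} := by
    simp only [Set.ofPred_and]
    refine (isClosed_le ?_ ?_).inter ((isClosed_le ?_ ?_).inter (isClosed_le ?_ ?_))
    all_goals fun_prop
  have hsub : broadcastCapacity p0 ⊆ _ := closure_minimal ?_ hclosed
  · obtain ⟨hY, hZ, hYZ⟩ := hsub h
    exact ⟨hY, hZ, hYZ⟩
  · rintro v ⟨hR1, hR2, hq, hach⟩
    exact hach.MI_le hp0 hR1 hR2 hq
end
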